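/- Let p(x) be a cubic polynomial over ℚ whose splitting field has degree 3 over ℚ, with (necessarily real and distinct) roots r₁, r₂, r₃. Then all three roots pairwise have common tails if and only if there exist two roots rᵢ ≠ rⱼ and integers α, β, γ, δ with |αδ - βγ| = 1 such that rⱼ = (αrᵢ + β)/(γrᵢ + δ). -/

import Mathlib

/-- The sequence of complete quotients of the continued fraction expansion of `x`:
`cfTerm x 0 = x` and `cfTerm x (n+1) = 1 / (cfTerm x n - ⌊cfTerm x n⌋)`. -/
noncomputable def cfTerm (x : ℝ) : ℕ → ℝ
  | 0 => x
  | n + 1 => (cfTerm x n - ⌊cfTerm x n⌋)⁻¹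

/-- The `n`-th partial quotient (digit) of the simple continued fraction expansion
`[x₀; x₁, x₂, …]` of `x`. -/
noncomputable def cfDigit (x : ℝ) (n : ℕ) : ℤ := ⌊cfTerm x n⌋

/-- Two real numbers have *common tails* if their continued fraction expansions
eventually agree: there exist `m n` with `s_{m+k} = t_{n+k}` for all `k ≥ 0`. -/
def CommonTails (s t : ℝ) : Prop :=
  ∃ m n : ℕ, ∀ k : ℕ, cfDigit s (m + k) = cfDigit t (n + k)

lemma cfTerm_succ (x : ℝ) (n : ℕ) : cfTerm x (n+1) = (cfTerm x n - ⌊cfTerm x n⌋)⁻¹ := rfl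

lemma cfTerm_shift (x : ℝ) (m : ℕ) : ∀ k, cfTerm x (m + k) = cfTerm (cfTerm x m) k := by
  intro k
  induction k with
  | zero => rfl
  | succ k ih =>
    have : m + (k + 1) = (m + k) + 1 := by omega
    rw [this, cfTerm_succ, ih, cfTerm_succ]

lemma Irrational.inv' {y : ℝ} (h : Irrational y) : Irrational y⁻¹ := by
  rintro ⟨q, hq⟩
  have hy0 : y ≠ 0 := by
    intro h0
    exact h ⟨0, by simp [h0]⟩
  exact h ⟨q⁻¹, by rw [Rat.cast_inv, hq, inv_inv]⟩

lemma Irrational.cfTerm_irr {x : ℝ} (hx : Irrational x) : ∀ n, Irrational (cfTerm x n) := by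
  intro n
  induction n with
  | zero => exact hx
  | succ n ih => exact (ih.sub_intCast _).inv'

lemma fract_pos_of_irrational {y : ℝ} (h : Irrational y) : 0 < y - ⌊y⌋ := by
  have h1 : (⌊y⌋ : ℝ) ≤ y := Int.floor_le y
  have h2 : (⌊y⌋ : ℝ) ≠ y := fun he => h ⟨(⌊y⌋ : ℚ), by push_cast [he]; norm_cast⟩
  cases lt_or_eq_of_le h1 with
  | inl h => linarith
  | inr h => exact absurd h h2

lemma fract_lt_one (y : ℝ) : y - ⌊y⌋ < 1 := by
  have := Int.lt_floor_add_one y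
  linarith

lemma one_lt_cfTerm {x : ℝ} (hx : Irrational x) (n : ℕ) : 1 < cfTerm x (n+1) := by
  rw [cfTerm_succ]
  have hirr := hx.cfTerm_irr n
  have h1 : 0 < cfTerm x n - ⌊cfTerm x n⌋ := fract_pos_of_irrational hirr
  have h2 : cfTerm x n - ⌊cfTerm x n⌋ < 1 := fract_lt_one _
  rw [lt_inv_comm₀ (by norm_num) h1] <;> try exact h2
  · simpa using h2

lemma cfTerm_expand {x : ℝ} (hx : Irrational x) (n : ℕ) :
    cfTerm x n = ⌊cfTerm x n⌋ + (cfTerm x (n+1))⁻¹ := by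
  rw [cfTerm_succ, inv_inv]
  ring

lemma one_le_cfDigit {x : ℝ} (hx : Irrational x) (n : ℕ) : 1 ≤ cfDigit x (n+1) := by
  have := one_lt_cfTerm hx n
  unfold cfDigit
  exact Int.le_floor.mpr (by exact_mod_cast this.le)

/-- Distance bound for two irrationals with the same continued fraction digits. -/
lemma cf_dist : ∀ n : ℕ, ∀ y z : ℝ, Irrational y → Irrational z →
    (∀ k, cfDigit y k = cfDigit z k) → |y - z| ≤ (1/4 : ℝ)^n := by
  intro n
  induction n with
  | zero =>
    intro y z hy hz hd
    have h0 : ⌊y⌋ = ⌊z⌋ := hd 0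
    have h1 : (⌊y⌋:ℝ) ≤ y := Int.floor_le y
    have h2 : y < ⌊y⌋ + 1 := Int.lt_floor_add_one y
    have h3 : (⌊z⌋:ℝ) ≤ z := Int.floor_le z
    have h4 : z < ⌊z⌋ + 1 := Int.lt_floor_add_one z
    rw [abs_le]
    constructor <;> [skip; skip] <;>
      · rw [h0] at h1 h2
        norm_num
        linarith
  | succ n ih =>
    intro y z hy hz hd
    set Y1 := cfTerm y 1 with hY1
    set Z1 := cfTerm z 1 with hZ1
    set Y2 := cfTerm y 2 with hY2
    set Z2 := cfTerm z 2 with hZ2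
    have hY1i : Irrational Y1 := hy.cfTerm_irr 1
    have hZ1i : Irrational Z1 := hz.cfTerm_irr 1
    have hY2i : Irrational Y2 := hy.cfTerm_irr 2
    have hZ2i : Irrational Z2 := hz.cfTerm_irr 2
    have hY1g : 1 < Y1 := one_lt_cfTerm hy 0
    have hZ1g : 1 < Z1 := one_lt_cfTerm hz 0
    have hY2g : 1 < Y2 := one_lt_cfTerm hy 1
    have hZ2g : 1 < Z2 := one_lt_cfTerm hz 1
    -- digits of the twice-shifted tails agree
    have hd2 : ∀ k, cfDigit Y2 k = cfDigit Z2 k := by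
      intro k
      have e1 : cfDigit Y2 k = cfDigit y (2 + k) := by
        unfold cfDigit; rw [cfTerm_shift y 2 k]
      have e2 : cfDigit Z2 k = cfDigit z (2 + k) := by
        unfold cfDigit; rw [cfTerm_shift z 2 k]
      rw [e1, e2, hd (2+k)]
    have hih := ih Y2 Z2 hY2i hZ2i hd2
    -- expansions
    have e0 : (⌊y⌋ : ℝ) = (⌊z⌋ : ℝ) := by exact_mod_cast hd 0
    have e1 : (⌊Y1⌋ : ℝ) = (⌊Z1⌋ : ℝ) := by
      have : cfDigit y 1 = cfDigit z 1 := hd 1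
      unfold cfDigit at this
      exact_mod_cast this
    have hyexp : y = ⌊y⌋ + Y1⁻¹ := cfTerm_expand hy 0
    have hzexp : z = ⌊z⌋ + Z1⁻¹ := cfTerm_expand hz 0
    have hY1exp : Y1 = ⌊Y1⌋ + Y2⁻¹ := cfTerm_expand hy 1
    have hZ1exp : Z1 = ⌊Z1⌋ + Z2⁻¹ := cfTerm_expand hz 1
    have ha1 : (1:ℝ) ≤ ⌊Y1⌋ := by exact_mod_cast one_le_cfDigit hy 0
    -- key identity
    have hkey : y - z = (Y2 - Z2) / (Y1 * Z1 * Y2 * Z2) := by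
      rw [hyexp, hzexp, e0]
      rw [hY1exp, hZ1exp, e1]
      field_simp
      ring
    have hY2ne : Y2 ≠ 0 := by linarith
    have hZ2ne : Z2 ≠ 0 := by linarith
    have hprod : (4:ℝ) ≤ Y1 * Z1 * Y2 * Z2 := by
      have h1 : Y1 * Y2 = (⌊Y1⌋:ℝ) * Y2 + 1 := by
        nth_rewrite 1 [hY1exp]
        rw [add_mul, inv_mul_cancel₀ hY2ne]
      have h2 : Z1 * Z2 = (⌊Z1⌋:ℝ) * Z2 + 1 := by
        nth_rewrite 1 [hZ1exp]
        rw [add_mul, inv_mul_cancel₀ hZ2ne]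
      have ha1' : (1:ℝ) ≤ ⌊Z1⌋ := e1 ▸ ha1
      have hb1 : 2 ≤ Y1 * Y2 := by nlinarith
      have hb2 : 2 ≤ Z1 * Z2 := by nlinarith
      calc (4:ℝ) ≤ (Y1*Y2) * (Z1*Z2) := by nlinarith
        _ = Y1 * Z1 * Y2 * Z2 := by ring
    have hpos : (0:ℝ) < Y1 * Z1 * Y2 * Z2 := by linarith
    rw [hkey, abs_div, abs_of_pos hpos]
    have h5 : |Y2 - Z2| / (Y1 * Z1 * Y2 * Z2) ≤ |Y2 - Z2| / 4 :=
      div_le_div_of_nonneg_left (abs_nonneg _) (by norm_num) hprod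
    have h6 : (1/4:ℝ)^(n+1) = (1/4)^n / 4 := by rw [pow_succ]; ring
    rw [h6]
    have h7 : |Y2 - Z2| / 4 ≤ (1/4:ℝ)^n / 4 := by linarith
    linarith

lemma cf_digits_inj {y z : ℝ} (hy : Irrational y) (hz : Irrational z)
    (h : ∀ k, cfDigit y k = cfDigit z k) : y = z := by
  by_contra hne
  have habs : 0 < |y - z| := abs_pos.mpr (sub_ne_zero.mpr hne)
  obtain ⟨n, hn⟩ := exists_pow_lt_of_lt_one habs (by norm_num : (1/4:ℝ) < 1)
  exact absurd (cf_dist n y z hy hz h) (not_le.mpr hn)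

lemma CommonTails.symm' {s t : ℝ} (h : CommonTails s t) : CommonTails t s := by
  obtain ⟨m, n, hd⟩ := h
  exact ⟨n, m, fun k => (hd k).symm⟩

lemma CommonTails.trans' {s t u : ℝ} (h1 : CommonTails s t) (h2 : CommonTails t u) :
    CommonTails s u := by
  obtain ⟨m, n, hd1⟩ := h1
  obtain ⟨n', m', hd2⟩ := h2
  rcases le_total n n' with h | h
  · refine ⟨m + (n' - n), m', fun k => ?_⟩
    have e1 := hd1 ((n' - n) + k)
    have e2 := hd2 k
    have e3 : m + (n' - n) + k = m + ((n' - n) + k) := by omega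
    have e4 : n + ((n' - n) + k) = n' + k := by omega
    rw [e3, e1, e4, e2]
  · refine ⟨m, m' + (n - n'), fun k => ?_⟩
    have e1 := hd1 k
    have e2 := hd2 ((n - n') + k)
    have e3 : n' + ((n - n') + k) = n + k := by omega
    have e4 : m' + (n - n') + k = m' + ((n - n') + k) := by omega
    rw [e1, ← e3, e2, ← e4]

lemma commonTails_of_term_eq {s t : ℝ} (m n : ℕ) (h : cfTerm s m = cfTerm t n) :
    CommonTails s t := by
  refine ⟨m, n, fun k => ?_⟩
  unfold cfDigit
  rw [cfTerm_shift s m k, cfTerm_shift t n k, h]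

lemma commonTails_of_term_ct {s t : ℝ} (m n : ℕ)
    (h : CommonTails (cfTerm s m) (cfTerm t n)) : CommonTails s t := by
  obtain ⟨m', n', hd⟩ := h
  refine ⟨m + m', n + n', fun k => ?_⟩
  have e1 : m + m' + k = m + (m' + k) := by omega
  have e2 : n + n' + k = n + (n' + k) := by omega
  rw [e1, e2]
  unfold cfDigit
  rw [cfTerm_shift s m, cfTerm_shift t n]
  exact hd k

lemma ct_add_int {x : ℝ} (n : ℤ) : CommonTails x (x + n) := by
  apply commonTails_of_term_eq 1 1
  rw [cfTerm_succ, cfTerm_succ]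
  unfold cfTerm
  rw [Int.floor_add_intCast]
  push_cast
  ring_nf

lemma ct_self_div_sub_one : ∀ y : ℝ, Irrational y → 1 < y → CommonTails y (y / (y - 1)) := by
  have main : ∀ y : ℝ, Irrational y → 2 < y → CommonTails y (y / (y - 1)) := by
    intro y hy h2
    set z := y / (y - 1) with hz
    have hy1 : (0:ℝ) < y - 1 := by linarith
    have hz1 : z - 1 = 1 / (y - 1) := by
      rw [hz]; field_simp; ring
    have hzgt : 1 < z := by
      rw [← sub_pos, hz1]; positivity
    have hzlt : z < 2 := by
      have : z - 1 < 1 := by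
        rw [hz1, div_lt_one hy1]; linarith
      linarith
    have hfz : ⌊z⌋ = 1 := by
      apply Int.floor_eq_iff.mpr
      constructor <;> push_cast <;> linarith
    have hterm : cfTerm z 1 = y - 1 := by
      rw [cfTerm_succ]
      unfold cfTerm
      rw [hfz]
      push_cast
      rw [hz1, one_div, inv_inv]
    -- y ≈ y - 1 ≈ z
    have c1 : CommonTails y (y - 1) := by
      have h := ct_add_int (x := y) (-1)
      push_cast at h
      rw [show y - 1 = y + (-1) by ring]
      exact h
    have c2 : CommonTails z (y - 1) := by
      apply commonTails_of_term_eq 1 0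
      rw [hterm]; rfl
    exact c1.trans' c2.symm'
  intro y hy h1
  rcases lt_trichotomy y 2 with h2 | h2 | h2
  · -- 1 < y < 2 : use involution
    set z := y / (y - 1) with hz
    have hy1 : (0:ℝ) < y - 1 := by linarith
    have hylt : y - 1 < 1 := by linarith
    have hzgt : 2 < z := by
      rw [hz, lt_div_iff₀ hy1]; nlinarith
    have hzirr : Irrational z := by
      have h3 : z = 1 + (y-1)⁻¹ := by rw [hz]; field_simp; ring
      rw [h3, add_comm]
      have h4 := ((hy.sub_intCast 1).inv').add_intCast 1
      push_cast at h4 ⊢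
      exact h4
    have hback : z / (z - 1) = y := by
      rw [hz]
      have hne : y - 1 ≠ 0 := ne_of_gt hy1
      field_simp
      ring
    have := main z hzirr hzgt
    rw [hback] at this
    exact this.symm'
  · exfalso
    have := hy.ne_int 2
    push_cast at this
    exact this h2
  · exact main y hy h2

lemma ct_neg {x : ℝ} (hx : Irrational x) : CommonTails x (-x) := by
  set a := ⌊x⌋ with ha
  have hf1 : 0 < x - a := fract_pos_of_irrational hx
  have hf2 : x - a < 1 := fract_lt_one x
  have hfneg : ⌊-x⌋ = -a - 1 := by
    apply Int.floor_eq_iff.mpr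
    constructor <;> push_cast <;> linarith
  set y := cfTerm x 1 with hy
  have hyval : y = (x - a)⁻¹ := by rw [hy, cfTerm_succ]; rfl
  have hyirr : Irrational y := hx.cfTerm_irr 1
  have hygt : 1 < y := one_lt_cfTerm hx 0
  have hzval : cfTerm (-x) 1 = (1 - (x - a))⁻¹ := by
    rw [cfTerm_succ]
    unfold cfTerm
    rw [hfneg]
    push_cast
    ring_nf
  have hz2 : cfTerm (-x) 1 = y / (y - 1) := by
    rw [hzval, hyval]
    have h1 : x - a ≠ 0 := ne_of_gt hf1
    have h2 : 1 - (x - a) ≠ 0 := by intro h; apply absurd hf2; linarith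
    have h3 : (x-a)⁻¹ - 1 ≠ 0 := by
      intro h
      have : (x-a)⁻¹ = 1 := by linarith
      have : x - a = 1 := by
        field_simp at this
        linarith
      exact h2 (by linarith)
    field_simp
  apply commonTails_of_term_ct 1 1
  rw [hz2, ← hy]
  exact ct_self_div_sub_one y hyirr hygt

lemma ct_inv {x : ℝ} (hx : Irrational x) : CommonTails x x⁻¹ := by
  have hx0 : x ≠ 0 := fun h => hx ⟨0, by simp [h]⟩
  have pos_case : ∀ w : ℝ, Irrational w → 0 < w → CommonTails w w⁻¹ := by
    intro w hw hwpos
    have hw1 : w ≠ 1 := fun h => hw ⟨1, by simp [h]⟩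
    rcases lt_or_gt_of_ne hw1 with h1 | h1
    · -- 0 < w < 1 : cfTerm w 1 = w⁻¹
      apply commonTails_of_term_eq 1 0
      rw [cfTerm_succ]
      unfold cfTerm
      have : ⌊w⌋ = 0 := by
        apply Int.floor_eq_iff.mpr
        constructor <;> push_cast <;> linarith
      rw [this]
      push_cast
      ring_nf
    · -- 1 < w : cfTerm w⁻¹ 1 = w
      apply commonTails_of_term_eq 0 1
      rw [cfTerm_succ]
      unfold cfTerm
      have hinv1 : w⁻¹ < 1 := by
        rw [inv_lt_one_iff₀]; right; exact h1
      have hinv0 : 0 < w⁻¹ := by positivity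
      have : ⌊w⁻¹⌋ = 0 := by
        apply Int.floor_eq_iff.mpr
        constructor <;> push_cast <;> linarith
      rw [this]
      push_cast
      rw [sub_zero, inv_inv]
  rcases lt_or_gt_of_ne hx0 with hneg | hpos
  · have hnx : Irrational (-x) := hx.neg
    have c1 : CommonTails x (-x) := ct_neg hx
    have c2 : CommonTails (-x) (-x)⁻¹ := pos_case (-x) hnx (by linarith)
    have c3 : CommonTails (-x)⁻¹ x⁻¹ := by
      have h4 : (-x)⁻¹ = -(x⁻¹) := by field_simp
      have := ct_neg (x := (-x)⁻¹) (hnx.inv')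
      rw [h4] at this ⊢
      rw [neg_neg] at this
      exact this
    exact (c1.trans' c2).trans' c3
  · exact pos_case x hx hpos

lemma denom_ne_zero {x : ℝ} (hx : Irrational x) {γ δ : ℤ} (h : ¬(γ = 0 ∧ δ = 0)) :
    (γ:ℝ) * x + δ ≠ 0 := by
  by_cases hγ : γ = 0
  · subst hγ
    have hδ : δ ≠ 0 := fun hd => h ⟨rfl, hd⟩
    simp only [Int.cast_zero, zero_mul, zero_add]
    exact_mod_cast hδ
  · intro heq
    apply hx
    refine ⟨(-δ : ℚ)/(γ : ℚ), ?_⟩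
    push_cast
    rw [div_eq_iff (by exact_mod_cast hγ)]
    linarith

lemma irrational_mobius {x : ℝ} (hx : Irrational x) (α β γ δ : ℤ)
    (h : |α * δ - β * γ| = 1) : Irrational (((α:ℝ) * x + β) / ((γ:ℝ) * x + δ)) := by
  have hdet0 : α * δ - β * γ ≠ 0 := by
    intro h0; rw [h0] at h; simp at h
  have hγδ : ¬(γ = 0 ∧ δ = 0) := by
    rintro ⟨h1, h2⟩; subst h1; subst h2; simp at hdet0
  have hden : (γ:ℝ) * x + δ ≠ 0 := denom_ne_zero hx hγδ
  rintro ⟨q, hq⟩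
  have hq' : (q:ℝ) * ((γ:ℝ) * x + δ) = (α:ℝ) * x + β := by
    rw [hq]; exact div_mul_cancel₀ _ hden
  have hx' : x * ((q:ℝ) * γ - α) = (β:ℝ) - q * δ := by linarith [hq']
  by_cases hc : (q:ℝ) * γ - α = 0
  · have h1 : (α:ℝ) = q * γ := by linarith
    have h2 : (β:ℝ) = q * δ := by
      rw [hc, mul_zero] at hx'; linarith
    have : ((α * δ - β * γ : ℤ) : ℝ) = 0 := by
      push_cast
      rw [h1, h2]; ring
    exact hdet0 (by exact_mod_cast this)
  · apply hx
    refine ⟨((β:ℚ) - q * δ)/((q:ℚ) * γ - α), ?_⟩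
    push_cast
    rw [div_eq_iff (by push_cast at hc ⊢; exact hc)]
    linarith [hx']

lemma serret_main : ∀ N : ℕ, ∀ γ : ℤ, γ.natAbs < N → ∀ α β δ : ℤ, |α * δ - β * γ| = 1 →
    ∀ x : ℝ, Irrational x → CommonTails x (((α:ℝ) * x + β) / ((γ:ℝ) * x + δ)) := by
  intro N
  induction N with
  | zero => intro γ h; omega
  | succ N IH =>
    intro γ hN α β δ hdet x hx
    by_cases hγ : γ = 0
    · subst hγ
      rw [mul_zero, sub_zero] at hdet
      have had : α * δ = 1 ∨ α * δ = -1 := by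
        rcases (abs_eq (by norm_num : (0:ℤ) ≤ 1)).mp hdet with h | h
        · left; exact h
        · right; exact h
      have hα : α = 1 ∨ α = -1 := by
        rcases had with h | h
        · exact Int.isUnit_iff.mp (IsUnit.of_mul_eq_one δ h)
        · exact Int.isUnit_iff.mp (IsUnit.of_mul_eq_one (-δ) (by rw [mul_neg, h, neg_neg]))
      have hδ : δ = 1 ∨ δ = -1 := by
        rcases hα with h1 | h1 <;> subst h1 <;> omega
      rcases hα with h1 | h1 <;> subst h1 <;> rcases hδ with h2 | h2 <;> subst h2
      · rw [show (((1:ℤ):ℝ) * x + (β:ℝ)) / (((0:ℤ):ℝ) * x + ((1:ℤ):ℝ)) = x + (β:ℝ) from by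
          push_cast; ring]
        exact ct_add_int β
      · rw [show (((1:ℤ):ℝ) * x + (β:ℝ)) / (((0:ℤ):ℝ) * x + ((-1:ℤ):ℝ)) = -x + ((-β:ℤ):ℝ) from by
          push_cast; ring]
        exact (ct_neg hx).trans' (ct_add_int (-β))
      · rw [show (((-1:ℤ):ℝ) * x + (β:ℝ)) / (((0:ℤ):ℝ) * x + ((1:ℤ):ℝ)) = -x + ((β:ℤ):ℝ) from by
          push_cast; ring]
        exact (ct_neg hx).trans' (ct_add_int β)
      · rw [show (((-1:ℤ):ℝ) * x + (β:ℝ)) / (((0:ℤ):ℝ) * x + ((-1:ℤ):ℝ)) = x + ((-β:ℤ):ℝ) from by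
          push_cast; ring]
        exact ct_add_int (-β)
    · -- main Euclidean step
      set q := α / γ with hq
      set r := α % γ with hr
      set s := β - q * δ with hs
      have hr0 : 0 ≤ r := Int.emod_nonneg α hγ
      have hrlt : r < |γ| := Int.emod_lt_abs α hγ
      have hdiv : γ * q + r = α := Int.mul_ediv_add_emod α γ
      have hrabs : r.natAbs < N := by
        have h2 : (γ.natAbs : ℤ) = |γ| := (Int.abs_eq_natAbs γ).symm
        omega
      have hdet' : |γ * s - δ * r| = 1 := by
        have hr' : r = α - γ * q := by omega
        have he : γ * s - δ * r = -(α * δ - β * γ) := by rw [hr', hs]; ring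
        rw [he, abs_neg]; exact hdet
      have ht := IH r hrabs γ δ s hdet' x hx
      set t := ((γ:ℝ) * x + (δ:ℝ)) / ((r:ℝ) * x + (s:ℝ)) with htdef
      have hdet0' : γ * s - δ * r ≠ 0 := by
        intro h0; rw [h0] at hdet'; simp at hdet'
      have hrs : ¬(r = 0 ∧ s = 0) := by
        rintro ⟨h1, h2⟩; rw [h1, h2] at hdet0'; simp at hdet0'
      have hden1 : (γ:ℝ) * x + δ ≠ 0 := denom_ne_zero hx (by tauto)
      have hden2 : (r:ℝ) * x + s ≠ 0 := denom_ne_zero hx hrs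
      have htirr : Irrational t := irrational_mobius hx γ δ r s hdet'
      have hα' : (α:ℝ) = (γ:ℝ) * q + r := by exact_mod_cast hdiv.symm
      have hβ' : (β:ℝ) = (s:ℝ) + q * δ := by rw [hs]; push_cast; ring
      have hexp : ((α:ℝ) * x + β) / ((γ:ℝ) * x + δ) = t⁻¹ + (q:ℝ) := by
        rw [htdef, inv_div]
        rw [div_add' _ _ _ hden1, div_eq_div_iff hden1 hden1]
        rw [hα', hβ']
        ring
      rw [hexp]
      exact (ht.trans' (ct_inv htirr)).trans' (ct_add_int q)

lemma serret {x : ℝ} (hx : Irrational x) (α β γ δ : ℤ) (hdet : |α * δ - β * γ| = 1) :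
    CommonTails x (((α:ℝ) * x + β) / ((γ:ℝ) * x + δ)) :=
  serret_main (γ.natAbs + 1) γ (by omega) α β δ hdet x hx

def MEquiv (x y : ℝ) : Prop :=
  ∃ α β γ δ : ℤ, |α * δ - β * γ| = 1 ∧ y = ((α:ℝ) * x + β) / ((γ:ℝ) * x + δ)

lemma MEquiv.refl' (x : ℝ) : MEquiv x x :=
  ⟨1, 0, 0, 1, by norm_num, by push_cast; norm_num⟩

lemma MEquiv.symm' {x y : ℝ} (hx : Irrational x) (h : MEquiv x y) : MEquiv y x := by
  obtain ⟨α, β, γ, δ, hdet, heq⟩ := h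
  have hdet0 : α * δ - β * γ ≠ 0 := by intro h0; rw [h0] at hdet; simp at hdet
  have hγδ : ¬(γ = 0 ∧ δ = 0) := by rintro ⟨h1, h2⟩; rw [h1, h2] at hdet0; simp at hdet0
  have hden : (γ:ℝ) * x + δ ≠ 0 := denom_ne_zero hx hγδ
  have heq' : y * ((γ:ℝ) * x + δ) = (α:ℝ) * x + β := by
    rw [heq]; exact div_mul_cancel₀ _ hden
  have hc : (γ:ℝ) * y - α ≠ 0 := by
    intro h0
    have h1 : (α:ℝ) = γ * y := by linarith
    have h2 : x * ((γ:ℝ) * y - α) = (β:ℝ) - δ * y := by linarith [heq']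
    have h3 : (β:ℝ) = δ * y := by
      rw [h0, mul_zero] at h2; linarith
    have : ((α * δ - β * γ : ℤ) : ℝ) = 0 := by push_cast; rw [h1, h3]; ring
    exact hdet0 (by exact_mod_cast this)
  refine ⟨δ, -β, -γ, α, ?_, ?_⟩
  · rw [show δ * α - -β * -γ = α * δ - β * γ from by ring]; exact hdet
  · have h2 : x * ((γ:ℝ) * y - α) = (β:ℝ) - δ * y := by linarith [heq']
    rw [eq_div_iff (by push_cast; intro h0; apply hc; linarith)]
    push_cast
    linarith [h2]

lemma MEquiv.trans' {x y z : ℝ} (hx : Irrational x) (h1 : MEquiv x y) (h2 : MEquiv y z) :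
    MEquiv x z := by
  obtain ⟨a1, b1, c1, d1, hdet1, heq1⟩ := h1
  obtain ⟨a2, b2, c2, d2, hdet2, heq2⟩ := h2
  have hdet10 : a1 * d1 - b1 * c1 ≠ 0 := by intro h0; rw [h0] at hdet1; simp at hdet1
  have hden1 : (c1:ℝ) * x + d1 ≠ 0 := by
    apply denom_ne_zero hx
    rintro ⟨h1', h2'⟩; rw [h1', h2'] at hdet10; simp at hdet10
  have hyirr : Irrational y := heq1 ▸ irrational_mobius hx a1 b1 c1 d1 hdet1
  have hdet20 : a2 * d2 - b2 * c2 ≠ 0 := by intro h0; rw [h0] at hdet2; simp at hdet2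
  have hden2 : (c2:ℝ) * y + d2 ≠ 0 := by
    apply denom_ne_zero hyirr
    rintro ⟨h1', h2'⟩; rw [h1', h2'] at hdet20; simp at hdet20
  have hy' : y * ((c1:ℝ) * x + d1) = (a1:ℝ) * x + b1 := by rw [heq1]; exact div_mul_cancel₀ _ hden1
  refine ⟨a2 * a1 + b2 * c1, a2 * b1 + b2 * d1, c2 * a1 + d2 * c1, c2 * b1 + d2 * d1, ?_, ?_⟩
  · have he : (a2 * a1 + b2 * c1) * (c2 * b1 + d2 * d1) -
        (a2 * b1 + b2 * d1) * (c2 * a1 + d2 * c1) = (a1 * d1 - b1 * c1) * (a2 * d2 - b2 * c2) := by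
      ring
    rw [he, abs_mul, hdet1, hdet2, mul_one]
  · have hnum : ((a2 * a1 + b2 * c1 : ℤ) : ℝ) * x + ((a2 * b1 + b2 * d1 : ℤ) : ℝ) =
        ((a2:ℝ) * y + b2) * ((c1:ℝ) * x + d1) := by
      push_cast
      linear_combination -(a2:ℝ) * hy'
    have hden : ((c2 * a1 + d2 * c1 : ℤ) : ℝ) * x + ((c2 * b1 + d2 * d1 : ℤ) : ℝ) =
        ((c2:ℝ) * y + d2) * ((c1:ℝ) * x + d1) := by
      push_cast
      linear_combination -(c2:ℝ) * hy'
    rw [hnum, hden, heq2, mul_div_mul_right _ _ hden1]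

lemma mequiv_cfTerm {x : ℝ} (hx : Irrational x) : ∀ n, MEquiv x (cfTerm x n) := by
  intro n
  induction n with
  | zero => exact MEquiv.refl' x
  | succ n ih =>
    apply ih.trans' hx
    refine ⟨0, 1, 1, -⌊cfTerm x n⌋, by norm_num, ?_⟩
    rw [cfTerm_succ]
    push_cast
    rw [zero_mul, zero_add, one_mul]
    rw [inv_eq_one_div]
    ring_nf

lemma mequiv_of_commonTails {x y : ℝ} (hx : Irrational x) (hy : Irrational y)
    (h : CommonTails x y) : MEquiv x y := by
  obtain ⟨m, n, hd⟩ := h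
  have hu : cfTerm x m = cfTerm y n := by
    apply cf_digits_inj (hx.cfTerm_irr m) (hy.cfTerm_irr n)
    intro k
    unfold cfDigit
    rw [← cfTerm_shift, ← cfTerm_shift]
    exact hd k
  have h1 := mequiv_cfTerm hx m
  have h2 := mequiv_cfTerm hy n
  rw [hu] at h1
  exact MEquiv.trans' hx h1 (h2.symm' hy)

open Polynomial IntermediateField in
lemma no_rat_root (p : Polynomial ℚ) (hdeg : p.degree = 3)
    (hsplit : Module.finrank ℚ (IntermediateField.adjoin ℚ (p.rootSet ℂ)) = 3)
    (q : ℚ) (hq : p.eval q = 0) : False := by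
  have hp0 : p ≠ 0 := fun h => by simp [h] at hdeg
  have hnat : p.natDegree = 3 := natDegree_eq_of_degree_eq_some hdeg
  have hfac : p = (X - C q) * (p /ₘ (X - C q)) := (mul_divByMonic_eq_iff_isRoot.mpr hq).symm
  set b := p /ₘ (X - C q) with hbdef
  have hb0 : b ≠ 0 := by intro h; rw [h, mul_zero] at hfac; exact hp0 hfac
  have hbdeg : b.natDegree = 2 := by
    have h1 : ((X - C q) * b).natDegree = (X - C q).natDegree + b.natDegree :=
      natDegree_mul (X_sub_C_ne_zero q) hb0
    rw [← hfac, hnat, natDegree_X_sub_C] at h1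
    omega
  -- b has a complex root w
  have hbmapdeg : 0 < (b.map (algebraMap ℚ ℂ)).degree := by
    rw [degree_map_eq_of_injective (algebraMap ℚ ℂ).injective, degree_eq_natDegree hb0, hbdeg]
    norm_num
  obtain ⟨w, hw⟩ := Complex.exists_root hbmapdeg
  have hwb : Polynomial.aeval w b = 0 := by
    rw [aeval_def, ← eval_map]; exact hw
  have hint : IsIntegral ℚ w := (IsAlgebraic.isIntegral ⟨b, hb0, hwb⟩)
  have hminle : (minpoly ℚ w).natDegree ≤ 2 := by
    rw [← hbdeg]
    exact natDegree_le_of_dvd (minpoly.dvd ℚ w hwb) hb0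
  have hfr : Module.finrank ℚ (IntermediateField.adjoin ℚ {w}) = (minpoly ℚ w).natDegree :=
    IntermediateField.adjoin.finrank hint
  -- coefficients of b
  set B0 := algebraMap ℚ ℂ (b.coeff 0) with hB0
  set B1 := algebraMap ℚ ℂ (b.coeff 1) with hB1
  set B2 := algebraMap ℚ ℂ (b.coeff 2) with hB2
  have hb2ne : b.coeff 2 ≠ 0 := by
    rw [← hbdeg]; exact leadingCoeff_ne_zero.mpr hb0
  have hB2ne : B2 ≠ 0 := by
    rw [hB2]; exact (_root_.map_ne_zero _).mpr hb2ne
  have hexpand : ∀ u : ℂ, Polynomial.aeval u b = B0 + B1 * u + B2 * u^2 := by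
    intro u
    rw [aeval_eq_sum_range, hbdeg]
    rw [Finset.sum_range_succ, Finset.sum_range_succ, Finset.sum_range_one]
    simp [Algebra.smul_def, hB0, hB1, hB2]
  have hw2 : B0 + B1 * w + B2 * w^2 = 0 := by rw [← hexpand]; exact hwb
  -- all complex roots of p lie in ℚ⟮w⟯
  have hle : IntermediateField.adjoin ℚ (p.rootSet ℂ) ≤ IntermediateField.adjoin ℚ {w} := by
    rw [IntermediateField.adjoin_le_iff]
    intro u hu
    have hup : Polynomial.aeval u p = 0 := (Polynomial.mem_rootSet.mp hu).2
    rw [hfac] at hup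
    rw [map_mul] at hup
    rcases mul_eq_zero.mp hup with h1 | h1
    · have h1' : u - algebraMap ℚ ℂ q = 0 := by simpa using h1
      rw [sub_eq_zero.mp h1']
      exact IntermediateField.algebraMap_mem _ q
    · have hu2 : B0 + B1 * u + B2 * u^2 = 0 := by rw [← hexpand]; exact h1
      have hfactor : (u - w) * (B2 * (u + w) + B1) = 0 := by
        linear_combination hu2 - hw2
      rcases mul_eq_zero.mp hfactor with h2 | h2
      · rw [sub_eq_zero.mp h2]
        exact IntermediateField.mem_adjoin_simple_self ℚ w
      · have hval : u = algebraMap ℚ ℂ (-(b.coeff 1) / (b.coeff 2)) - w := by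
          rw [map_div₀, map_neg]
          rw [← hB1, ← hB2]
          field_simp
          linear_combination h2
        rw [hval]
        exact sub_mem (IntermediateField.algebraMap_mem _ _)
          (IntermediateField.mem_adjoin_simple_self ℚ w)
  -- finrank comparison
  have hfd : FiniteDimensional ℚ (IntermediateField.adjoin ℚ {w}) :=
    IntermediateField.adjoin.finiteDimensional hint
  have hfle : Module.finrank ℚ (IntermediateField.adjoin ℚ (p.rootSet ℂ)) ≤
      Module.finrank ℚ (IntermediateField.adjoin ℚ {w}) :=
    LinearMap.finrank_le_finrank_of_injective
      (f := (IntermediateField.inclusion hle).toLinearMap)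
      (fun a b h => by
        have := congrArg Subtype.val h
        exact Subtype.ext this)
  omega

open Polynomial in
lemma root_of_linear (g : Polynomial ℚ) (hg1 : g.natDegree = 1) : ∃ q : ℚ, g.eval q = 0 := by
  have hg0 : g ≠ 0 := fun h => by simp [h] at hg1
  have hgle : g.degree ≤ 1 := by
    rw [degree_eq_natDegree hg0, hg1]
    exact_mod_cast le_refl (1 : WithBot ℕ)
  have hge : g = C (g.coeff 1) * X + C (g.coeff 0) := eq_X_add_C_of_degree_le_one hgle
  have hc1 : g.coeff 1 ≠ 0 := by
    rw [← hg1]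
    exact leadingCoeff_ne_zero.mpr hg0
  refine ⟨-(g.coeff 0) / (g.coeff 1), ?_⟩
  conv_lhs => rw [hge]
  simp
  field_simp
  ring

open Polynomial in
lemma p_irred (p : Polynomial ℚ) (hdeg : p.degree = 3) (hnoroot : ∀ q : ℚ, p.eval q ≠ 0) :
    Irreducible p := by
  have hp0 : p ≠ 0 := fun h => by simp [h] at hdeg
  have hnat : p.natDegree = 3 := natDegree_eq_of_degree_eq_some hdeg
  constructor
  · rw [Polynomial.isUnit_iff_degree_eq_zero, hdeg]
    norm_num
  · intro a b hab
    by_contra hcon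
    push_neg at hcon
    obtain ⟨hau, hbu⟩ := hcon
    have ha0 : a ≠ 0 := fun h => hp0 (by rw [hab, h, zero_mul])
    have hb0 : b ≠ 0 := fun h => hp0 (by rw [hab, h, mul_zero])
    have hsum : a.natDegree + b.natDegree = 3 := by
      rw [← natDegree_mul ha0 hb0, ← hab, hnat]
    have hane : a.natDegree ≠ 0 := by
      intro h
      obtain ⟨c, hc⟩ := natDegree_eq_zero.mp h
      apply hau
      rw [← hc]
      apply IsUnit.map
      exact isUnit_iff_ne_zero.mpr (fun h0 => ha0 (by rw [← hc, h0, map_zero]))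
    have hbne : b.natDegree ≠ 0 := by
      intro h
      obtain ⟨c, hc⟩ := natDegree_eq_zero.mp h
      apply hbu
      rw [← hc]
      apply IsUnit.map
      exact isUnit_iff_ne_zero.mpr (fun h0 => hb0 (by rw [← hc, h0, map_zero]))
    have h1 : a.natDegree = 1 ∨ b.natDegree = 1 := by omega
    rcases h1 with h1 | h1
    · obtain ⟨q, hq⟩ := root_of_linear a h1
      exact hnoroot q (by rw [hab, eval_mul, hq, zero_mul])
    · obtain ⟨q, hq⟩ := root_of_linear b h1
      exact hnoroot q (by rw [hab, eval_mul, hq, mul_zero])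

open Polynomial in
lemma irrational_root (p : Polynomial ℚ) (hnoroot : ∀ q : ℚ, p.eval q ≠ 0)
    {r : ℝ} (hr : Polynomial.aeval r p = 0) : Irrational r := by
  rintro ⟨q, hq⟩
  apply hnoroot q
  have h1 : Polynomial.aeval ((q:ℝ)) p = 0 := by rw [hq]; exact hr
  have h2 : (q:ℝ) = algebraMap ℚ ℝ q := (eq_ratCast (algebraMap ℚ ℝ) q).symm
  rw [h2] at h1
  rw [aeval_algebraMap_apply] at h1
  have h3 : Polynomial.aeval q p = p.eval q := by rw [aeval_def, eval]; rfl
  rw [h3] at h1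
  exact (_root_.map_eq_zero (algebraMap ℚ ℝ)).mp h1

open Polynomial in
lemma roots_eq (p : Polynomial ℚ) (hdeg : p.degree = 3)
    (r₁ r₂ r₃ : ℝ) (h12 : r₁ ≠ r₂) (h13 : r₁ ≠ r₃) (h23 : r₂ ≠ r₃)
    (hr₁ : Polynomial.aeval r₁ p = 0) (hr₂ : Polynomial.aeval r₂ p = 0)
    (hr₃ : Polynomial.aeval r₃ p = 0) :
    (p.map (algebraMap ℚ ℝ)).roots = {r₁, r₂, r₃} := by
  have hp0 : p ≠ 0 := fun h => by simp [h] at hdeg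
  have hnat : p.natDegree = 3 := natDegree_eq_of_degree_eq_some hdeg
  set P := p.map (algebraMap ℚ ℝ) with hP
  have hP0 : P ≠ 0 := by
    rw [hP]
    exact (Polynomial.map_ne_zero_iff (algebraMap ℚ ℝ).injective).mpr hp0
  have hmem : ∀ r : ℝ, Polynomial.aeval r p = 0 → r ∈ P.roots := by
    intro r hr
    rw [mem_roots hP0]
    rw [IsRoot, hP, eval_map, ← aeval_def]
    exact hr
  have hnodup : ({r₁, r₂, r₃} : Multiset ℝ).Nodup := by
    refine Multiset.nodup_cons.mpr ⟨?_, Multiset.nodup_cons.mpr ⟨?_, Multiset.nodup_singleton _⟩⟩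
    · simp [h12, h13]
    · simp [h23]
  have hle : ({r₁, r₂, r₃} : Multiset ℝ) ≤ P.roots := by
    rw [Multiset.le_iff_subset hnodup]
    intro a ha
    have ha' : a = r₁ ∨ a = r₂ ∨ a = r₃ := by simpa using ha
    rcases ha' with rfl | rfl | rfl
    · exact hmem _ hr₁
    · exact hmem _ hr₂
    · exact hmem _ hr₃
  have hcard : Multiset.card P.roots ≤ 3 := by
    have := card_roots' P
    rwa [hP, natDegree_map_eq_of_injective (algebraMap ℚ ℝ).injective, hnat] at this
  have := Multiset.eq_of_le_of_card_le hle (by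
    rw [show Multiset.card ({r₁, r₂, r₃} : Multiset ℝ) = 3 from by simp]
    exact hcard)
  exact this.symm

open Polynomial IntermediateField in
lemma rotate (p : Polynomial ℚ) (hdeg : p.degree = 3)
    (hsplit : Module.finrank ℚ (IntermediateField.adjoin ℚ (p.rootSet ℂ)) = 3)
    {x y z : ℝ} (hx : Polynomial.aeval x p = 0) (hy : Polynomial.aeval y p = 0)
    (hz : Polynomial.aeval z p = 0)
    (hxy : x ≠ y) (hxz : x ≠ z) (hyz : y ≠ z)
    (α β γ δ : ℤ) (heq : y * ((γ:ℝ) * x + δ) = (α:ℝ) * x + β) :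
    z * ((γ:ℝ) * y + δ) = (α:ℝ) * y + β := by
  classical
  have hp0 : p ≠ 0 := fun h => by simp [h] at hdeg
  have hnat : p.natDegree = 3 := natDegree_eq_of_degree_eq_some hdeg
  have hnoroot : ∀ q : ℚ, p.eval q ≠ 0 := fun q hq => no_rat_root p hdeg hsplit q hq
  have hirr : Irreducible p := p_irred p hdeg hnoroot
  have hroots := roots_eq p hdeg x y z hxy hxz hyz hx hy hz
  have hmapne : p.map (algebraMap ℚ ℝ) ≠ 0 :=
    (Polynomial.map_ne_zero_iff (algebraMap ℚ ℝ).injective).mpr hp0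
  have hall : ∀ w : ℝ, Polynomial.aeval w p = 0 → w = x ∨ w = y ∨ w = z := by
    intro w hw
    have hw' : w ∈ (p.map (algebraMap ℚ ℝ)).roots := by
      rw [mem_roots hmapne, IsRoot, eval_map, ← aeval_def]
      exact hw
    rw [hroots] at hw'
    simpa using hw'
  have hsplR : (p.map (algebraMap ℚ ℝ)).Splits := by
    rw [splits_iff_card_roots, hroots,
      natDegree_map_eq_of_injective (algebraMap ℚ ℝ).injective, hnat]
    simp
  have hsplC : (p.map (algebraMap ℚ ℂ)).Splits := IsAlgClosed.splits _
  haveI hKR : IsSplittingField ℚ (adjoin ℚ (p.rootSet ℝ)) p :=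
    adjoin_rootSet_isSplittingField hsplR
  haveI hKC : IsSplittingField ℚ (adjoin ℚ (p.rootSet ℂ)) p :=
    adjoin_rootSet_isSplittingField hsplC
  haveI : FiniteDimensional ℚ (adjoin ℚ (p.rootSet ℝ)) :=
    Polynomial.IsSplittingField.finiteDimensional _ p
  have hfrR : Module.finrank ℚ (adjoin ℚ (p.rootSet ℝ)) = 3 := by
    have e1 := (Polynomial.IsSplittingField.algEquiv (adjoin ℚ (p.rootSet ℝ)) p)
    have e2 := (Polynomial.IsSplittingField.algEquiv (adjoin ℚ (p.rootSet ℂ)) p)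
    rw [e1.toLinearEquiv.finrank_eq, ← e2.toLinearEquiv.finrank_eq, hsplit]
  set KR := adjoin ℚ (p.rootSet ℝ) with hKRdef
  have hlc : p.leadingCoeff ≠ 0 := leadingCoeff_ne_zero.mpr hp0
  -- degree facts for any root
  have hint : ∀ w : ℝ, Polynomial.aeval w p = 0 → IsIntegral ℚ w := by
    intro w hw
    exact IsAlgebraic.isIntegral ⟨p, hp0, hw⟩
  have hmindeg : ∀ w : ℝ, Polynomial.aeval w p = 0 → (minpoly ℚ w).natDegree = 3 := by
    intro w hw
    rw [← minpoly.eq_of_irreducible hirr hw, natDegree_mul hp0 (by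
      simp only [ne_eq, C_eq_zero]
      exact inv_ne_zero hlc), natDegree_C, hnat]
  have hQw : ∀ w : ℝ, (hw : Polynomial.aeval w p = 0) → ℚ⟮w⟯ = KR := by
    intro w hw
    have hle : ℚ⟮w⟯ ≤ KR := by
      rw [adjoin_simple_le_iff]
      exact subset_adjoin ℚ _ (by rw [mem_rootSet]; exact ⟨hp0, hw⟩)
    apply eq_of_le_of_finrank_le hle
    rw [hfrR, adjoin.finrank (hint w hw), hmindeg w hw]
  -- membership of roots in KR
  have hmem : ∀ w : ℝ, Polynomial.aeval w p = 0 → w ∈ KR := by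
    intro w hw
    exact subset_adjoin ℚ _ (by rw [mem_rootSet]; exact ⟨hp0, hw⟩)
  set X : KR := ⟨x, hmem x hx⟩ with hX
  set Y : KR := ⟨y, hmem y hy⟩ with hY
  set Z : KR := ⟨z, hmem z hz⟩ with hZ
  -- value of equivOfEq
  have hval : ∀ (S T : IntermediateField ℚ ℝ) (h : S = T) (a : S),
      ((equivOfEq h a : T) : ℝ) = (a : ℝ) := by
    intro S T h a
    subst h
    rfl
  have hval2 : ∀ (S T : IntermediateField ℚ ℝ) (h : S = T) (a : T),
      (((equivOfEq h).symm a : S) : ℝ) = (a : ℝ) := by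
    intro S T h a
    subst h
    rfl
  -- construct φ : KR →ₐ[ℚ] ℝ with φ X = y
  have hyroot : y ∈ (minpoly ℚ x).aroots ℝ := by
    rw [mem_aroots]
    refine ⟨minpoly.ne_zero (hint x hx), ?_⟩
    rw [← minpoly.eq_of_irreducible hirr hx, map_mul, hy, zero_mul]
  set φ₀ := (algHomAdjoinIntegralEquiv ℚ (hint x hx)).symm ⟨y, hyroot⟩ with hφ₀
  have hφ₀gen : φ₀ (AdjoinSimple.gen ℚ x) = y :=
    algHomAdjoinIntegralEquiv_symm_apply_gen ℚ (hint x hx) _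
  set φ : KR →ₐ[ℚ] ℝ := φ₀.comp (equivOfEq (hQw x hx)).symm.toAlgHom with hφ
  have hφX : φ X = y := by
    rw [hφ]
    have h1 : (equivOfEq (hQw x hx)).symm X = AdjoinSimple.gen ℚ x := by
      apply Subtype.val_injective
      rw [hval2 _ _ (hQw x hx) X]
      rfl
    show φ₀ ((equivOfEq (hQw x hx)).symm X) = y
    rw [h1]
    exact hφ₀gen
  have hφinj : Function.Injective φ := φ.toRingHom.injective
  -- φ maps roots to roots
  have hφroot : ∀ w : KR, Polynomial.aeval (w:ℝ) p = 0 → Polynomial.aeval (φ w) p = 0 := by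
    intro w hw
    have hwK : Polynomial.aeval w p = 0 := by
      have h0 : KR.val (Polynomial.aeval w p) = KR.val 0 := by
        rw [← Polynomial.aeval_algHom_apply KR.val w p, map_zero]
        exact hw
      exact KR.val.toRingHom.injective h0
    rw [Polynomial.aeval_algHom_apply φ w p, hwK, map_zero]
  -- uniqueness: a hom fixing z is the inclusion
  have huniq : ∀ ψ₁ ψ₂ : KR →ₐ[ℚ] ℝ, ψ₁ Z = ψ₂ Z → ψ₁ = ψ₂ := by
    intro ψ₁ ψ₂ hψ
    have hEgen : (equivOfEq (hQw z hz)) (AdjoinSimple.gen ℚ z) = Z := by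
      apply Subtype.val_injective
      rw [hval _ _ (hQw z hz) (AdjoinSimple.gen ℚ z)]
      rfl
    have hgenval : ∀ ψ : KR →ₐ[ℚ] ℝ,
        (ψ.comp (equivOfEq (hQw z hz)).toAlgHom) (AdjoinSimple.gen ℚ z) = ψ Z := by
      intro ψ
      show ψ ((equivOfEq (hQw z hz)) (AdjoinSimple.gen ℚ z)) = ψ Z
      rw [hEgen]
    have h1 : ψ₁.comp (equivOfEq (hQw z hz)).toAlgHom = ψ₂.comp (equivOfEq (hQw z hz)).toAlgHom := by
      apply PowerBasis.algHom_ext (adjoin.powerBasis (hint z hz))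
      rw [adjoin.powerBasis_gen, hgenval, hgenval, hψ]
    ext a
    obtain ⟨b, rfl⟩ := (equivOfEq (hQw z hz)).surjective a
    have := congrArg (fun f => f b) h1
    exact this
  -- identify φ Y
  have hφYroot := hφroot Y hy
  have hφZroot := hφroot Z hz
  have hφY : φ Y = z := by
    rcases hall (φ Y) hφYroot with h1 | h1 | h1
    · -- φ Y = x : then φ Z = z and φ = inclusion, contradiction
      exfalso
      have hφZ : φ Z = z := by
        rcases hall (φ Z) hφZroot with h2 | h2 | h2
        · exfalso
          have : Z = Y := hφinj (show φ Z = φ Y by rw [h2, h1])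
          have hv : z = y := congrArg Subtype.val this
          exact hyz hv.symm
        · exfalso
          have : Z = X := hφinj (show φ Z = φ X by rw [h2, hφX])
          have hv : z = x := congrArg Subtype.val this
          exact hxz hv.symm
        · exact h2
      have hid : φ = KR.val := huniq φ KR.val (by rw [hφZ]; rfl)
      rw [hid] at hφX
      exact hxy hφX
    · exfalso
      have : Y = X := hφinj (show φ Y = φ X by rw [h1, hφX])
      have hv : y = x := congrArg Subtype.val this
      exact hxy hv.symm
    · exact h1
  -- transfer the equation
  have hEqM : Y * ((γ:KR) * X + (δ:KR)) = (α:KR) * X + (β:KR) := by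
    apply Subtype.val_injective
    push_cast
    exact heq
  have h2 := congrArg φ hEqM
  simp only [map_mul, map_add, map_intCast] at h2
  rw [hφX, hφY] at h2
  exact h2

lemma back_lemma (p : Polynomial ℚ) (hdeg : p.degree = 3)
    (hsplit : Module.finrank ℚ (IntermediateField.adjoin ℚ (p.rootSet ℂ)) = 3)
    {x y z : ℝ} (hx : Polynomial.aeval x p = 0) (hy : Polynomial.aeval y p = 0)
    (hz : Polynomial.aeval z p = 0)
    (hxy : x ≠ y) (hxz : x ≠ z) (hyz : y ≠ z)
    (α β γ δ : ℤ) (hdet : |α * δ - β * γ| = 1)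
    (heqv : y = ((α:ℝ) * x + β) / ((γ:ℝ) * x + δ)) :
    CommonTails x y ∧ CommonTails y z ∧ CommonTails x z := by
  have hnoroot : ∀ q : ℚ, p.eval q ≠ 0 := fun q hq => no_rat_root p hdeg hsplit q hq
  have hix : Irrational x := irrational_root p hnoroot hx
  have hiy : Irrational y := irrational_root p hnoroot hy
  have hiz : Irrational z := irrational_root p hnoroot hz
  have hdet0 : α * δ - β * γ ≠ 0 := by intro h0; rw [h0] at hdet; simp at hdet
  have hγδ : ¬(γ = 0 ∧ δ = 0) := by rintro ⟨h1, h2⟩; rw [h1, h2] at hdet0; simp at hdet0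
  have hdenx : (γ:ℝ) * x + δ ≠ 0 := denom_ne_zero hix hγδ
  have hdeny : (γ:ℝ) * y + δ ≠ 0 := denom_ne_zero hiy hγδ
  have hdenz : (γ:ℝ) * z + δ ≠ 0 := denom_ne_zero hiz hγδ
  have heq1 : y * ((γ:ℝ) * x + δ) = (α:ℝ) * x + β := by rw [heqv]; exact div_mul_cancel₀ _ hdenx
  have heq2 : z * ((γ:ℝ) * y + δ) = (α:ℝ) * y + β :=
    rotate p hdeg hsplit hx hy hz hxy hxz hyz α β γ δ heq1
  have heq3 : x * ((γ:ℝ) * z + δ) = (α:ℝ) * z + β :=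
    rotate p hdeg hsplit hy hz hx hyz hxy.symm hxz.symm α β γ δ heq2
  have ct_xy : CommonTails x y := by
    rw [heqv]; exact serret hix α β γ δ hdet
  have ct_yz : CommonTails y z := by
    have hz' : z = ((α:ℝ) * y + β) / ((γ:ℝ) * y + δ) := by
      rw [eq_div_iff hdeny]; exact heq2
    rw [hz']; exact serret hiy α β γ δ hdet
  have ct_zx : CommonTails z x := by
    have hx' : x = ((α:ℝ) * z + β) / ((γ:ℝ) * z + δ) := by
      rw [eq_div_iff hdenz]; exact heq3
    rw [hx']; exact serret hiz α β γ δ hdet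
  exact ⟨ct_xy, ct_yz, ct_zx.symm'⟩

/-- For a cubic over ℚ with splitting field of degree 3 and distinct real roots `r₁ r₂ r₃`,
the three roots pairwise have common tails iff some two distinct roots `rᵢ ≠ rⱼ` satisfy
`rⱼ = (αrᵢ + β)/(γrᵢ + δ)` with integers `α β γ δ` and `|αδ - βγ| = 1`. -/
theorem roots_common_tails_stmt_6 (p : Polynomial ℚ) (hdeg : p.degree = 3)
    (hsplit : Module.finrank ℚ (IntermediateField.adjoin ℚ (p.rootSet ℂ)) = 3)
    (r₁ r₂ r₃ : ℝ) (h12 : r₁ ≠ r₂) (h13 : r₁ ≠ r₃) (h23 : r₂ ≠ r₃)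
    (hr₁ : Polynomial.aeval r₁ p = 0) (hr₂ : Polynomial.aeval r₂ p = 0)
    (hr₃ : Polynomial.aeval r₃ p = 0) :
    (CommonTails r₁ r₂ ∧ CommonTails r₂ r₃ ∧ CommonTails r₁ r₃) ↔
      ∃ ri rj : ℝ, ri ∈ ({r₁, r₂, r₃} : Set ℝ) ∧ rj ∈ ({r₁, r₂, r₃} : Set ℝ) ∧ ri ≠ rj ∧
        ∃ α β γ δ : ℤ, |α * δ - β * γ| = 1 ∧
          rj = ((α : ℝ) * ri + (β : ℝ)) / ((γ : ℝ) * ri + (δ : ℝ)) := by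
  have hnoroot : ∀ q : ℚ, p.eval q ≠ 0 := fun q hq => no_rat_root p hdeg hsplit q hq
  have hi1 : Irrational r₁ := irrational_root p hnoroot hr₁
  have hi2 : Irrational r₂ := irrational_root p hnoroot hr₂
  constructor
  · rintro ⟨h12', _, _⟩
    obtain ⟨α, β, γ, δ, hdet, heqv⟩ := mequiv_of_commonTails hi1 hi2 h12'
    exact ⟨r₁, r₂, by simp, by simp, h12, α, β, γ, δ, hdet, heqv⟩
  · rintro ⟨ri, rj, hi, hj, hne, α, β, γ, δ, hdet, heqv⟩
    simp only [Set.mem_insert_iff, Set.mem_singleton_iff] at hi hj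
    rcases hi with rfl | rfl | rfl <;> rcases hj with rfl | rfl | rfl
    · exact absurd rfl hne
    · exact back_lemma p hdeg hsplit hr₁ hr₂ hr₃ h12 h13 h23 α β γ δ hdet heqv
    · obtain ⟨c13, c32, c12⟩ :=
        back_lemma p hdeg hsplit hr₁ hr₃ hr₂ h13 h12 h23.symm α β γ δ hdet heqv
      exact ⟨c12, c32.symm', c13⟩
    · obtain ⟨c21, c13, c23⟩ :=
        back_lemma p hdeg hsplit hr₂ hr₁ hr₃ h12.symm h23 h13 α β γ δ hdet heqv
      exact ⟨c21.symm', c23, c13⟩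
    · exact absurd rfl hne
    · obtain ⟨c23, c31, c21⟩ :=
        back_lemma p hdeg hsplit hr₂ hr₃ hr₁ h23 h12.symm h13.symm α β γ δ hdet heqv
      exact ⟨c21.symm', c23, c31.symm'⟩
    · obtain ⟨c31, c12, c32⟩ :=
        back_lemma p hdeg hsplit hr₃ hr₁ hr₂ h13.symm h23.symm h12 α β γ δ hdet heqv
      exact ⟨c12, c32.symm', c31.symm'⟩
    · obtain ⟨c32, c21, c31⟩ :=
        back_lemma p hdeg hsplit hr₃ hr₂ hr₁ h23.symm h13.symm h12.symm α β γ δ hdet heqv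
      exact ⟨c21.symm', c32.symm', c31.symm'⟩
    · exact absurd rfl hne
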